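/- Suppose for each integer r there is a polynomial θ_r(q) with only finitely many nonzero, and for all L ≥ 0 define F(L,q) = ∑_{j=-∞}^{∞} θ_j(q) [2L choose L - j]_q. Then for all L ≥ 0: ∑_{r=0}^{L} (q^{r^2} (q;q)_{2L} / ((q;q)_{L-r} (q;q)_{2r})) F(r,q) = ∑_{j=-∞}^{∞} θ_j(q) q^{j^2} [2L choose L - j]_q. -/

import Mathlib

open Finset

noncomputable section

abbrev F := RatFunc ℚ

/-- The variable `q`, a transcendental element. -/
def q : F := RatFunc.X

/-- `(b;b)_n = ∏_{i=1}^n (1 - b^i)` -/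
def pq (b : F) (n : ℕ) : F := ∏ i ∈ Finset.range n, (1 - b ^ (i + 1))

/-- Gaussian binomial coefficient in base `b`, zero when `k < 0` or `k > a`. -/
def qbin (b : F) (a k : ℤ) : F :=
  if 0 ≤ k ∧ k ≤ a then pq b a.toNat / (pq b k.toNat * pq b (a - k).toNat) else 0

/-- Primed Gaussian binomial: equals 1 when `a < 0` and `k = 0`. -/
def qbin' (b : F) (a k : ℤ) : F :=
  if a < 0 ∧ k = 0 then 1 else qbin b a k

/-! Exchanging the finite sum over `j` with the sum over `r` reduces the claim to one `j` at a
time, i.e. to the identity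
`∑_r b^{r²} (b;b)_{2L} / ((b;b)_{L-r} (b;b)_{2r}) [2r, r-j] = b^{j²} [2L, L-j]`.
Both sides are invariant under `j ↦ -j`, so let `j ≥ 0`. The terms with `r < j` vanish, and
putting `r = j + s` turns the left side into `b^{j²} (b;b)_{2L}` times the finite Durfee sum
`∑_s b^{s(s+t)} / ((b;b)_s (b;b)_{s+t} (b;b)_{M-s})` with `M = L - j`, `t = 2j`. That sum equals
`1 / ((b;b)_M (b;b)_{M+t})`, by induction on `M` and then on `t`: splitting one factor with
`1/(b;b)_{n+1} = 1/(b;b)_n + b^{n+1}/(b;b)_{n+1}` relates neighbouring values of `(M, t)`. -/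

def durfeeSum (b : F) (M t : ℕ) : F :=
  ∑ s ∈ range (M + 1), b ^ (s * (s + t)) * ((pq b s)⁻¹ * (pq b (s + t))⁻¹ * (pq b (M - s))⁻¹)

def shiftedDurfeeSum (b : F) (M t : ℕ) : F :=
  ∑ s ∈ range (M + 1), b ^ (s * (s + t) - s) * ((pq b s)⁻¹ * (pq b (s + t))⁻¹ * (pq b (M - s))⁻¹)

section

variable {b : F}

theorem pq_succ (n : ℕ) : pq b (n + 1) = pq b n * (1 - b ^ (n + 1)) :=
  prod_range_succ _ _

theorem pq_ne_zero (hb : ∀ n : ℕ, b ^ (n + 1) ≠ 1) (n : ℕ) : pq b n ≠ 0 :=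
  prod_ne_zero_iff.2 fun i _ => sub_ne_zero.2 (hb i).symm

theorem inv_pq_eq_mul_inv_pq_succ (hb : ∀ n : ℕ, b ^ (n + 1) ≠ 1) (n : ℕ) :
    (pq b n)⁻¹ = (1 - b ^ (n + 1)) * (pq b (n + 1))⁻¹ := by
  rw [pq_succ, mul_inv, mul_left_comm, mul_inv_cancel₀ (sub_ne_zero.2 (hb n).symm), mul_one]

theorem durfeeSum_succ (hb : ∀ n : ℕ, b ^ (n + 1) ≠ 1) (M t : ℕ) :
    durfeeSum b (M + 1) t = durfeeSum b M t + b ^ (M + 1) * shiftedDurfeeSum b (M + 1) t := by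
  have hexp (s : ℕ) (hs : s ≤ M + 1) : M + 1 + (s * (s + t) - s) = s * (s + t) + (M + 1 - s) := by
    have := (Nat.le_mul_self s).trans (Nat.mul_le_mul_left s (Nat.le_add_right s t))
    omega
  rw [durfeeSum, shiftedDurfeeSum, sum_range_succ _ (M + 1), sum_range_succ _ (M + 1),
    mul_add (b ^ (M + 1)), mul_sum, ← add_assoc, durfeeSum, ← sum_add_distrib]
  congr 1
  · refine sum_congr rfl fun s hs => ?_
    replace hs : s ≤ M := Nat.lt_succ_iff.1 (mem_range.1 hs)
    have hpow : b ^ (M + 1) * b ^ (s * (s + t) - s) = b ^ (s * (s + t)) * b ^ (M + 1 - s) := by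
      rw [← pow_add, ← pow_add, hexp s (by omega)]
    have hsplit := inv_pq_eq_mul_inv_pq_succ hb (M - s)
    rw [show M - s + 1 = M + 1 - s by omega] at hsplit
    linear_combination -(b ^ (s * (s + t)) * (pq b s)⁻¹ * (pq b (s + t))⁻¹) * hsplit -
      ((pq b s)⁻¹ * (pq b (s + t))⁻¹ * (pq b (M + 1 - s))⁻¹) * hpow
  · rw [← mul_assoc (b ^ (M + 1)), ← pow_add, hexp _ le_rfl, Nat.sub_self,
      add_zero, mul_assoc]

theorem shiftedDurfeeSum_succ (hb : ∀ n : ℕ, b ^ (n + 1) ≠ 1) (N t : ℕ) :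
    shiftedDurfeeSum b N (t + 1) = durfeeSum b N t + b ^ (t + 1) * durfeeSum b N (t + 1) := by
  rw [shiftedDurfeeSum, durfeeSum, durfeeSum, mul_sum, ← sum_add_distrib]
  refine sum_congr rfl fun s _ => ?_
  have hexp : s * (s + t + 1) - s = s * (s + t) := by
    have : s * (s + t + 1) = s * (s + t) + s := by ring
    omega
  have hpow : b ^ (t + 1) * b ^ (s * (s + t + 1)) = b ^ (s * (s + t)) * b ^ (s + t + 1) := by
    rw [← pow_add, ← pow_add]
    congr 1
    ring
  simp only [← add_assoc, hexp]
  linear_combination -(b ^ (s * (s + t)) * (pq b s)⁻¹ * (pq b (N - s))⁻¹) *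
      inv_pq_eq_mul_inv_pq_succ hb (s + t) -
    ((pq b s)⁻¹ * (pq b (s + t + 1))⁻¹ * (pq b (N - s))⁻¹) * hpow

theorem shiftedDurfeeSum_zero (hb : ∀ n : ℕ, b ^ (n + 1) ≠ 1) (N : ℕ) :
    shiftedDurfeeSum b (N + 1) 0 = durfeeSum b N 1 + durfeeSum b (N + 1) 0 := by
  simp only [shiftedDurfeeSum, durfeeSum, add_zero]
  rw [sum_range_succ' _ (N + 1), sum_range_succ' _ (N + 1), ← add_assoc, ← sum_add_distrib]
  congr 1
  refine sum_congr rfl fun u _ => ?_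
  have hexp : (u + 1) * (u + 1) - (u + 1) = u * (u + 1) := by
    have : (u + 1) * (u + 1) = u * (u + 1) + (u + 1) := by ring
    omega
  have hpow : b ^ ((u + 1) * (u + 1)) = b ^ (u * (u + 1)) * b ^ (u + 1) := by
    rw [← pow_add]
    congr 1
    ring
  rw [hexp, hpow, show N + 1 - (u + 1) = N - u by omega]
  linear_combination -(b ^ (u * (u + 1)) * (pq b (u + 1))⁻¹ * (pq b (N - u))⁻¹) *
    inv_pq_eq_mul_inv_pq_succ hb u

theorem durfeeSum_eq (hb : ∀ n : ℕ, b ^ (n + 1) ≠ 1) (M t : ℕ) :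
    durfeeSum b M t = (pq b M)⁻¹ * (pq b (M + t))⁻¹ := by
  induction M generalizing t with
  | zero => simp [durfeeSum, pq]
  | succ M ihM =>
    induction t with
    | zero =>
      have h := durfeeSum_succ hb M 0
      rw [shiftedDurfeeSum_zero hb, ihM, ihM] at h
      refine mul_left_cancel₀ (sub_ne_zero.2 (hb M).symm) ?_
      linear_combination h + ((pq b M)⁻¹ + (pq b (M + 1))⁻¹) * inv_pq_eq_mul_inv_pq_succ hb M
    | succ t iht =>
      have h := durfeeSum_succ hb M (t + 1)
      rw [shiftedDurfeeSum_succ hb, ihM, iht, Nat.add_right_comm M 1 t] at h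
      rw [show M + 1 + (t + 1) = M + t + 1 + 1 by omega]
      refine mul_left_cancel₀ (sub_ne_zero.2 (hb (M + t + 1)).symm) ?_
      linear_combination h + (pq b (M + t + 1))⁻¹ * inv_pq_eq_mul_inv_pq_succ hb M +
        (pq b (M + 1))⁻¹ * inv_pq_eq_mul_inv_pq_succ hb (M + t + 1)

theorem qbin_of_neg {a k : ℤ} (hk : k < 0) : qbin b a k = 0 :=
  if_neg fun h => hk.not_ge h.1

theorem qbin_sub_right (a k : ℤ) : qbin b a (a - k) = qbin b a k := by
  unfold qbin
  by_cases h : 0 ≤ k ∧ k ≤ a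
  · rw [if_pos h, if_pos (by omega), sub_sub_cancel, mul_comm]
  · rw [if_neg h, if_neg (by omega)]

theorem qbin_two_mul_sub_natCast {n j : ℕ} (h : j ≤ n) :
    qbin b (2 * n) (n - j) = pq b (2 * n) / (pq b (n - j) * pq b (n + j)) := by
  rw [qbin, if_pos (by omega)]
  congr <;> omega

theorem qbin_two_mul_sub_natCast_of_lt {n j : ℕ} (h : n < j) :
    qbin b (2 * n) (n - j) = 0 :=
  qbin_of_neg (by omega)

theorem sum_range_mul_qbin_two_mul_sub_natCast (hb : ∀ n : ℕ, b ^ (n + 1) ≠ 1) (L j : ℕ) :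
    ∑ r ∈ range (L + 1), b ^ (r ^ 2) * pq b (2 * L) / (pq b (L - r) * pq b (2 * r)) *
        qbin b (2 * r) (r - j) =
      b ^ (j ^ 2) * qbin b (2 * L) (L - j) := by
  rcases le_or_gt j L with hjL | hLj
  · obtain ⟨M, rfl⟩ := Nat.exists_eq_add_of_le hjL
    have hterm (s : ℕ) :
        b ^ ((j + s) ^ 2) * pq b (2 * (j + M)) / (pq b (j + M - (j + s)) * pq b (2 * (j + s))) *
          qbin b (2 * ↑(j + s)) (↑(j + s) - j) =
        b ^ (j ^ 2) * pq b (2 * (j + M)) *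
          (b ^ (s * (s + 2 * j)) * ((pq b s)⁻¹ * (pq b (s + 2 * j))⁻¹ * (pq b (M - s))⁻¹)) := by
      have := pq_ne_zero hb (2 * (j + s))
      rw [qbin_two_mul_sub_natCast (by omega), Nat.add_sub_cancel_left, Nat.add_sub_add_left,
        show j + s + j = s + 2 * j by ring, show (j + s) ^ 2 = j ^ 2 + s * (s + 2 * j) by ring,
        pow_add]
      field_simp
    rw [show j + M + 1 = j + (M + 1) by ring, sum_range_add,
      sum_eq_zero fun r hr => by
        rw [qbin_two_mul_sub_natCast_of_lt (mem_range.1 hr), mul_zero],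
      zero_add, sum_congr rfl fun s _ => hterm s, ← mul_sum, ← durfeeSum, durfeeSum_eq hb,
      qbin_two_mul_sub_natCast hjL, Nat.add_sub_cancel_left, show j + M + j = M + 2 * j by ring]
    ring
  · rw [sum_eq_zero fun r hr => by
        rw [qbin_two_mul_sub_natCast_of_lt (by simp at hr; omega), mul_zero],
      qbin_two_mul_sub_natCast_of_lt hLj, mul_zero]

theorem sum_range_mul_qbin_two_mul_sub (hb : ∀ n : ℕ, b ^ (n + 1) ≠ 1) (L : ℕ) (j : ℤ) :
    ∑ r ∈ range (L + 1), b ^ (r ^ 2) * pq b (2 * L) / (pq b (L - r) * pq b (2 * r)) *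
        qbin b (2 * r) (r - j) =
      b ^ (j ^ 2) * qbin b (2 * L) (L - j) := by
  have hsymm (n : ℕ) : qbin b (2 * n) (n - j) = qbin b (2 * n) (n - j.natAbs) := by
    obtain ⟨k, rfl | rfl⟩ := Int.eq_nat_or_neg j
    · rfl
    · rw [← qbin_sub_right, Int.natAbs_neg, Int.natAbs_natCast]
      congr 1
      ring
  have hpow : b ^ (j ^ 2) = b ^ (j.natAbs ^ 2) := by
    rw [← Int.natAbs_sq, ← zpow_natCast, Nat.cast_pow]
  simp_rw [hsymm, hpow]
  exact sum_range_mul_qbin_two_mul_sub_natCast hb L j.natAbs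

end

theorem q_pow_succ_ne_one (n : ℕ) : q ^ (n + 1) ≠ 1 := by
  intro h
  have hX : (Polynomial.X : Polynomial ℚ) ^ (n + 1) = 1 :=
    IsFractionRing.injective (Polynomial ℚ) F (by simpa [q] using h)
  simpa using congrArg Polynomial.natDegree hX

theorem stmt18 (θ : ℤ → Polynomial ℚ) (hθ : (Function.support θ).Finite)
    (G : ℕ → F)
    (hG : ∀ L : ℕ,
      G L = ∑ᶠ j : ℤ, algebraMap (Polynomial ℚ) F (θ j) * qbin q (2 * (L : ℤ)) ((L : ℤ) - j)) :
    ∀ L : ℕ,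
      (∑ r ∈ Finset.range (L + 1),
          q ^ (r ^ 2) * pq q (2 * L) / (pq q (L - r) * pq q (2 * r)) * G r) =
        ∑ᶠ j : ℤ, algebraMap (Polynomial ℚ) F (θ j) * q ^ (j ^ 2) *
          qbin q (2 * (L : ℤ)) ((L : ℤ) - j) := by
  intro L
  simp_rw [hG, mul_finsum]
  rw [sum_finsum_comm _ _ fun r _ => hθ.subset fun j hj => ?_]
  · refine finsum_congr fun j => ?_
    rw [mul_assoc, ← sum_range_mul_qbin_two_mul_sub q_pow_succ_ne_one, mul_sum]
    exact sum_congr rfl fun r _ => by ring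
  · contrapose! hj
    simp [Function.notMem_support.1 hj]
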